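/- arXiv:2301.13734 — 3 statements merged into one kernel-verified Lean document; each statement's English description precedes it below -/
import Mathlib

section
/- In a finite-horizon MDP with horizon T, for any behavior policy μ = (μ₀,…,μ_{T−1}) satisfying for all t, s, a: μ_t(a|s) = 0 ⟹ π_t(a|s)·q_{π,t}(s,a) = 0, the per-decision importance sampling estimator is unbiased: for all t and s, E[G^PDIS(τ^{μ_{t:T−1}}_{t:T−1}) | S_t = s] = v_{π,t}(s). -/
open Finset

def Traj (S A : Type) : ℕ → Type
  | 0 => PUnit
  | n+1 => A × S × Traj S A n

instance trajFintype (S A : Type) [Fintype S] [Fintype A] : (n : ℕ) → Fintype (Traj S A n)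
  | 0 => inferInstanceAs (Fintype PUnit)
  | n+1 => letI := trajFintype S A n; inferInstanceAs (Fintype (A × S × Traj S A n))

/-- Probability of a trajectory segment of `n` steps starting at time `t` in state `s`,
under behavior policy `b` and transition kernel `p`. -/
noncomputable def trajP {S A : Type} (b : ℕ → S → A → ℝ) (p : S → A → S → ℝ) :
    (n : ℕ) → ℕ → S → Traj S A n → ℝ
  | 0, _, _, _ => 1
  | n+1, t, s, (a, s', τ) => b t s a * p s a s' * trajP b p n (t+1) s' τ

/-- Per-decision importance sampling return of a trajectory segment, with target policy `π`,
behavior policy `b`, and (deterministic) reward function `r`. -/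
noncomputable def pdis {S A : Type} (π b : ℕ → S → A → ℝ) (r : S → A → ℝ) :
    (n : ℕ) → ℕ → S → Traj S A n → ℝ
  | 0, _, _, _ => 0
  | n+1, t, s, (a, s', τ) => (π t s a / b t s a) * (r s a + pdis π b r n (t+1) s' τ)

/-- On-policy (undiscounted) return of a trajectory segment. -/
noncomputable def retG {S A : Type} (r : S → A → ℝ) : (n : ℕ) → S → Traj S A n → ℝ
  | 0, _, _ => 0
  | n+1, s, (a, s', τ) => r s a + retG r n s' τ

/-- Expectation of a trajectory functional, conditioned on `S_t = s`. -/
noncomputable def Ex {S A : Type} [Fintype S] [Fintype A] (b : ℕ → S → A → ℝ)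
    (p : S → A → S → ℝ) (n t : ℕ) (s : S) (f : Traj S A n → ℝ) : ℝ :=
  ∑ τ : Traj S A n, trajP b p n t s τ * f τ

/-- Variance of a trajectory functional, conditioned on `S_t = s`. -/
noncomputable def VarTraj {S A : Type} [Fintype S] [Fintype A] (b : ℕ → S → A → ℝ)
    (p : S → A → S → ℝ) (n t : ℕ) (s : S) (f : Traj S A n → ℝ) : ℝ :=
  Ex b p n t s (fun τ => (f τ)^2) - (Ex b p n t s f)^2

/-- `ν_{π,t}(s,a)`: variance of the next-state value. -/
noncomputable def nuF {S A : Type} [Fintype S] (p : S → A → S → ℝ) (v : ℕ → S → ℝ)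
    (t : ℕ) (s : S) (a : A) : ℝ :=
  (∑ s', p s a s' * (v (t+1) s')^2) - (∑ s', p s a s' * v (t+1) s')^2

theorem traj_sum_succ {S A : Type} [Fintype S] [Fintype A] (n : ℕ)
    (f : Traj S A (n+1) → ℝ) :
    ∑ τ : Traj S A (n+1), f τ = ∑ a : A, ∑ s' : S, ∑ τ : Traj S A n, f (a, s', τ) := by
  show ∑ x : A × S × Traj S A n, f x = _
  exact (Fintype.sum_prod_type ..).trans (Finset.sum_congr rfl fun a _ => Fintype.sum_prod_type ..)

theorem trajP_sum {S A : Type} [Fintype S] [Fintype A] (b : ℕ → S → A → ℝ)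
    (p : S → A → S → ℝ) (hb1 : ∀ t s, ∑ a, b t s a = 1) (hp1 : ∀ s a, ∑ s', p s a s' = 1) :
    ∀ (n t : ℕ) (s : S), ∑ τ : Traj S A n, trajP b p n t s τ = 1
  | 0, t, s => by simp only [trajP]; rw [Finset.sum_const]; show (Fintype.card PUnit) • (1:ℝ) = 1; simp
  | (n+1), t, s => by
    rw [traj_sum_succ]
    have : ∀ a : A, ∑ s' : S, ∑ τ : Traj S A n, trajP b p (n+1) t s (a, s', τ) = b t s a := by
      intro a
      have : ∀ s' : S, ∑ τ : Traj S A n, trajP b p (n+1) t s (a, s', τ)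
          = b t s a * p s a s' := by
        intro s'
        simp only [trajP, ← Finset.mul_sum, trajP_sum b p hb1 hp1 n (t+1) s', mul_one]
      simp only [this, ← Finset.mul_sum, hp1, mul_one]
    simp only [this, hb1]

theorem pdis_unbiased_aux {S A : Type} [Fintype S] [Fintype A]
    (T : ℕ) (p : S → A → S → ℝ) (r : S → A → ℝ) (π μ : ℕ → S → A → ℝ)
    (v : ℕ → S → ℝ) (q : ℕ → S → A → ℝ)
    (hp1 : ∀ s a, ∑ s', p s a s' = 1)
    (hμ1 : ∀ t s, ∑ a, μ t s a = 1)
    (hvT : ∀ s, v T s = 0)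
    (hq : ∀ t, t < T → ∀ s a, q t s a = r s a + ∑ s', p s a s' * v (t+1) s')
    (hv : ∀ t, t < T → ∀ s, v t s = ∑ a, π t s a * q t s a)
    (hcov : ∀ t, t < T → ∀ s a, μ t s a = 0 → π t s a * q t s a = 0) :
    ∀ (n t : ℕ), t + n = T → ∀ s : S, Ex μ p n t s (pdis π μ r n t s) = v t s
  | 0, t, ht, s => by
    subst ht
    simp only [Ex, pdis, mul_zero, Finset.sum_const, smul_zero]
    simpa using (hvT s).symm
  | (n+1), t, ht, s => by
    have htT : t < T := by omega
    unfold Ex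
    rw [traj_sum_succ]
    have key : ∀ a : A, (∑ s' : S, ∑ τ : Traj S A n,
        trajP μ p (n+1) t s (a, s', τ) * pdis π μ r (n+1) t s (a, s', τ))
        = π t s a * q t s a := by
      intro a
      have inner : ∀ s' : S, (∑ τ : Traj S A n,
          trajP μ p (n+1) t s (a, s', τ) * pdis π μ r (n+1) t s (a, s', τ))
          = μ t s a * p s a s' * ((π t s a / μ t s a) * (r s a + v (t+1) s')) := by
        intro s'
        have IH := pdis_unbiased_aux T p r π μ v q hp1 hμ1 hvT hq hv hcov n (t+1)
          (by omega) s'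
        simp only [trajP, pdis]
        have expand : ∀ τ : Traj S A n,
            μ t s a * p s a s' * trajP μ p n (t+1) s' τ *
              (π t s a / μ t s a * (r s a + pdis π μ r n (t+1) s' τ))
            = μ t s a * p s a s' * (π t s a / μ t s a) *
                (trajP μ p n (t+1) s' τ * r s a
                  + trajP μ p n (t+1) s' τ * pdis π μ r n (t+1) s' τ) := by
          intro τ; ring
        rw [Finset.sum_congr rfl (fun τ _ => expand τ), ← Finset.mul_sum,
          Finset.sum_add_distrib, ← Finset.sum_mul,
          trajP_sum μ p hμ1 hp1 n (t+1) s']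
        unfold Ex at IH
        rw [IH]; ring
      rw [Finset.sum_congr rfl (fun s' _ => inner s')]
      by_cases hμ : μ t s a = 0
      · simp [hμ, hcov t htT s a hμ]
      · have : ∀ s' : S, μ t s a * p s a s' * (π t s a / μ t s a * (r s a + v (t+1) s'))
            = π t s a * (p s a s' * (r s a + v (t+1) s')) := by
          intro s'; field_simp
        rw [Finset.sum_congr rfl (fun s' _ => this s'), ← Finset.mul_sum]
        congr 1
        rw [hq t htT s a]
        simp only [mul_add, Finset.sum_add_distrib, ← Finset.sum_mul, hp1, one_mul]
    rw [Finset.sum_congr rfl (fun a _ => key a), hv t htT s]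

/-- Unbiasedness of the PDIS estimator: for any behavior policy `μ` with
`μ_t(a|s) = 0 → π_t(a|s) q_{π,t}(s,a) = 0`, `E[G^PDIS(τ_{t:T-1}) | S_t = s] = v_{π,t}(s)`. -/
theorem pdis_unbiased {S A : Type} [Fintype S] [Fintype A]
    (T : ℕ) (p : S → A → S → ℝ) (r : S → A → ℝ) (π μ : ℕ → S → A → ℝ)
    (v : ℕ → S → ℝ) (q : ℕ → S → A → ℝ)
    (hp0 : ∀ s a s', 0 ≤ p s a s') (hp1 : ∀ s a, ∑ s', p s a s' = 1)
    (hπ0 : ∀ t s a, 0 ≤ π t s a) (hπ1 : ∀ t s, ∑ a, π t s a = 1)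
    (hμ0 : ∀ t s a, 0 ≤ μ t s a) (hμ1 : ∀ t s, ∑ a, μ t s a = 1)
    (hvT : ∀ s, v T s = 0)
    (hq : ∀ t, t < T → ∀ s a, q t s a = r s a + ∑ s', p s a s' * v (t+1) s')
    (hv : ∀ t, t < T → ∀ s, v t s = ∑ a, π t s a * q t s a)
    (hcov : ∀ t, t < T → ∀ s a, μ t s a = 0 → π t s a * q t s a = 0) :
    ∀ t, t < T → ∀ s, Ex μ p (T - t) t s (pdis π μ r (T - t) t s) = v t s := by
  intro t ht s
  exact pdis_unbiased_aux T p r π μ v q hp1 hμ1 hvT hq hv hcov (T - t) t (by omega) s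
end

section
/- Define, for a target policy π in a finite-horizon MDP, the reward function r̃_{π,t}(s,a) = ν_{π,t}(s,a) + q_{π,t}(s,a)² − v_{π,t}(s)², and let q̃_{π,t} be the action-value function of π with respect to r̃, i.e. q̃_{π,T−1}(s,a) = r̃_{π,T−1}(s,a) and q̃_{π,t}(s,a) = r̃_{π,t}(s,a) + ∑_{s',a'} p(s'|s,a)π_{t+1}(a'|s') q̃_{π,t+1}(s',a') for t ≤ T−2. Then the variance of the on-policy return satisfies Var(G_t | S_t = s) = ∑_a π_t(a|s) q̃_{π,t}(s,a) for all t, s. -/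
open Finset

section auxlem
variable {S A : Type} [Fintype S] [Fintype A]

lemma Ex_succ (b : ℕ → S → A → ℝ) (p : S → A → S → ℝ) (n t : ℕ) (s : S)
    (f : Traj S A (n+1) → ℝ) :
    Ex b p (n+1) t s f
      = ∑ a, b t s a * ∑ s', p s a s' * Ex b p n (t+1) s' (fun τ => f (a, s', τ)) := by
  show (∑ τ : A × S × Traj S A n, trajP b p (n+1) t s τ * f τ) = _
  rw [Fintype.sum_prod_type]
  refine Finset.sum_congr rfl fun a _ => ?_
  rw [Fintype.sum_prod_type, Finset.mul_sum]
  refine Finset.sum_congr rfl fun s' _ => ?_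
  simp only [Ex, Finset.mul_sum]
  refine Finset.sum_congr rfl fun τ _ => ?_
  show b t s a * p s a s' * trajP b p n (t+1) s' τ * f (a, s', τ) = _
  ring

lemma Ex_zero (b : ℕ → S → A → ℝ) (p : S → A → S → ℝ) (t : ℕ) (s : S)
    (f : Traj S A 0 → ℝ) : Ex b p 0 t s f = f PUnit.unit := by
  show (∑ τ : PUnit, trajP b p 0 t s τ * f τ) = _
  simp [trajP]
  exact Finset.sum_singleton f (PUnit.unit : Traj S A 0)

end auxlem

/-- The variance of the on-policy return is the `π`-average of `q̃_{π,t}`, the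
action-value function for the auxiliary reward `r̃_{π,t} = ν + q² − v²`. -/
theorem onpolicy_variance_bellman {S A : Type} [Fintype S] [Fintype A]
    (T : ℕ) (hT : 1 ≤ T) (p : S → A → S → ℝ) (r : S → A → ℝ) (π : ℕ → S → A → ℝ)
    (v : ℕ → S → ℝ) (q qt : ℕ → S → A → ℝ)
    (hp0 : ∀ s a s', 0 ≤ p s a s') (hp1 : ∀ s a, ∑ s', p s a s' = 1)
    (hπ0 : ∀ t s a, 0 ≤ π t s a) (hπ1 : ∀ t s, ∑ a, π t s a = 1)
    (hvT : ∀ s, v T s = 0)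
    (hq : ∀ t, t < T → ∀ s a, q t s a = r s a + ∑ s', p s a s' * v (t+1) s')
    (hv : ∀ t, t < T → ∀ s, v t s = ∑ a, π t s a * q t s a)
    (hqtT : ∀ s a, qt (T - 1) s a
      = nuF p v (T - 1) s a + (q (T - 1) s a) ^ 2 - (v (T - 1) s) ^ 2)
    (hqt : ∀ t, t + 1 < T → ∀ s a, qt t s a
      = (nuF p v t s a + (q t s a) ^ 2 - (v t s) ^ 2)
        + ∑ s', ∑ a', p s a s' * π (t+1) s' a' * qt (t+1) s' a') :
    ∀ t, t < T → ∀ s,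
      VarTraj π p (T - t) t s (retG r (T - t) s) = ∑ a, π t s a * qt t s a := by
  -- total probability is 1
  have hsum : ∀ n t s, ∑ τ : Traj S A n, trajP π p n t s τ = 1 := by
    intro n
    induction n with
    | zero =>
      intro t s
      show (∑ τ : PUnit, trajP π p 0 t s τ) = 1
      simp [trajP]
    | succ n ih =>
      intro t s
      have h := Ex_succ π p n t s (fun _ => (1:ℝ))
      simp only [Ex, mul_one, ih, hp1, hπ1] at h
      exact h
  -- expectation of constant plus functional
  have ExC : ∀ n t s (c : ℝ) (g : Traj S A n → ℝ),
      Ex π p n t s (fun τ => c + g τ) = c + Ex π p n t s g := by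
    intro n t s c g
    simp only [Ex, mul_add, Finset.sum_add_distrib, ← Finset.sum_mul, hsum, one_mul]
  -- expectation of squared shift
  have ExSq : ∀ n t s (c : ℝ) (g : Traj S A n → ℝ),
      Ex π p n t s (fun τ => (c + g τ)^2)
        = c^2 + 2*c*(Ex π p n t s g) + Ex π p n t s (fun τ => (g τ)^2) := by
    intro n t s c g
    have e : ∀ τ : Traj S A n, trajP π p n t s τ * (c + g τ)^2
        = trajP π p n t s τ * c^2 + 2*c*(trajP π p n t s τ * g τ)
          + trajP π p n t s τ * (g τ)^2 := fun τ => by ring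
    simp only [Ex, e, Finset.sum_add_distrib, ← Finset.sum_mul, ← Finset.mul_sum,
      hsum, one_mul]
  -- main joint induction
  have key : ∀ n t, t + (n+1) = T → ∀ s,
      Ex π p (n+1) t s (retG r (n+1) s) = v t s ∧
      Ex π p (n+1) t s (fun τ => (retG r (n+1) s τ)^2)
        = (∑ a, π t s a * qt t s a) + (v t s)^2 := by
    intro n
    induction n with
    | zero =>
      intro t ht s
      have htT : t < T := by omega
      have hTt : t + 1 = T := by omega
      have ht1 : t = T - 1 := by omega
      have hretG : ∀ (a : A) (s' : S) (τ : Traj S A 0),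
          retG r (0+1) s (a, s', τ) = r s a := by
        intro a s' τ
        show r s a + retG r 0 s' τ = r s a
        have h0 : retG r 0 s' τ = 0 := rfl
        rw [h0, add_zero]
      have hqr : ∀ a, q t s a = r s a := by
        intro a
        rw [hq t htT]
        simp [hTt, hvT]
      constructor
      · rw [Ex_succ, hv t htT]
        refine Finset.sum_congr rfl fun a _ => ?_
        congr 1
        have e1 : ∀ s', Ex π p 0 (t+1) s' (fun τ => retG r (0+1) s (a, s', τ)) = r s a := by
          intro s'
          rw [Ex_zero]
          exact hretG a s' _
        simp only [e1]
        rw [← Finset.sum_mul, hp1, one_mul, hqr]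
      · rw [Ex_succ]
        have e1 : ∀ (a : A) (s' : S),
            Ex π p 0 (t+1) s' (fun τ => (retG r (0+1) s (a, s', τ))^2) = (r s a)^2 := by
          intro a s'
          rw [Ex_zero]
          exact congrArg (fun x => x ^ 2) (hretG a s' _)
        simp only [e1]
        have e2 : ∀ a, (∑ s', p s a s' * (r s a)^2) = (r s a)^2 := by
          intro a
          rw [← Finset.sum_mul, hp1, one_mul]
        have hqt' : ∀ a, qt t s a = nuF p v t s a + (q t s a)^2 - (v t s)^2 := by
          intro a
          rw [ht1]
          exact hqtT s a
        have hnu : ∀ a, nuF p v t s a = 0 := by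
          intro a
          simp [nuF, hTt, hvT]
        simp only [e2, hqt', hnu, hqr, zero_add, mul_sub, Finset.sum_sub_distrib,
          ← Finset.sum_mul, hπ1, one_mul]
        ring
    | succ n ih =>
      intro t ht s
      have htT : t < T := by omega
      have ht1T : t + 1 < T := by omega
      have ih' := ih (t+1) (by omega)
      have hret : ∀ (a : A) (s' : S) (τ : Traj S A (n+1)),
          retG r (n+1+1) s (a, s', τ) = r s a + retG r (n+1) s' τ := fun a s' τ => rfl
      have hmean : Ex π p (n+1+1) t s (retG r (n+1+1) s) = v t s := by
        rw [Ex_succ, hv t htT]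
        have e1 : ∀ (a : A) (s' : S),
            Ex π p (n+1) (t+1) s' (fun τ => retG r (n+1+1) s (a, s', τ))
              = r s a + v (t+1) s' := by
          intro a s'
          have hf : (fun τ => retG r (n+1+1) s (a, s', τ))
              = fun τ => r s a + retG r (n+1) s' τ := funext (hret a s')
          rw [hf, ExC, (ih' s').1]
        simp only [e1]
        refine Finset.sum_congr rfl fun a _ => ?_
        rw [hq t htT]
        congr 1
        simp only [mul_add, Finset.sum_add_distrib, ← Finset.sum_mul, hp1, one_mul]
      refine ⟨hmean, ?_⟩
      rw [Ex_succ]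
      have e2 : ∀ (a : A) (s' : S),
          Ex π p (n+1) (t+1) s' (fun τ => (retG r (n+1+1) s (a, s', τ))^2)
            = (r s a)^2 + 2*(r s a)*(v (t+1) s')
              + ((∑ a', π (t+1) s' a' * qt (t+1) s' a') + (v (t+1) s')^2) := by
        intro a s'
        have hf : (fun τ => (retG r (n+1+1) s (a, s', τ))^2)
            = fun τ => (r s a + retG r (n+1) s' τ)^2 := funext fun τ => by rw [hret]
        rw [hf, ExSq, (ih' s').1, (ih' s').2]
      simp only [e2]
      have hR : (∑ a, π t s a * qt t s a) + (v t s)^2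
          = ∑ a, π t s a * (qt t s a + (v t s)^2) := by
        simp only [mul_add, Finset.sum_add_distrib, ← Finset.sum_mul, hπ1, one_mul]
      rw [hR]
      refine Finset.sum_congr rfl fun a _ => ?_
      congr 1
      have split : ∑ s', p s a s' * ((r s a)^2 + 2*(r s a)*(v (t+1) s')
            + ((∑ a', π (t+1) s' a' * qt (t+1) s' a') + (v (t+1) s')^2))
          = (∑ s', p s a s' * (r s a)^2)
            + (∑ s', p s a s' * (2*(r s a)*(v (t+1) s')))
            + ((∑ s', p s a s' * (∑ a', π (t+1) s' a' * qt (t+1) s' a'))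
              + (∑ s', p s a s' * (v (t+1) s')^2)) := by
        simp only [← Finset.sum_add_distrib]
        exact Finset.sum_congr rfl fun s' _ => by ring
      have c1 : (∑ s', p s a s' * (r s a)^2) = (r s a)^2 := by
        rw [← Finset.sum_mul, hp1, one_mul]
      have c2 : (∑ s', p s a s' * (2*(r s a)*(v (t+1) s')))
          = 2*(r s a)*(∑ s', p s a s' * v (t+1) s') := by
        rw [Finset.mul_sum]
        exact Finset.sum_congr rfl fun s' _ => by ring
      have c3 : (∑ s', p s a s' * (∑ a', π (t+1) s' a' * qt (t+1) s' a'))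
          = ∑ s', ∑ a', p s a s' * π (t+1) s' a' * qt (t+1) s' a' := by
        refine Finset.sum_congr rfl fun s' _ => ?_
        rw [Finset.mul_sum]
        exact Finset.sum_congr rfl fun a' _ => by ring
      rw [split, c1, c2, c3, hqt t ht1T s a, hq t htT s a]
      simp only [nuF]
      ring
  -- conclude
  intro t htT s
  obtain ⟨n, hn⟩ : ∃ n, T - t = n + 1 := ⟨T - t - 1, by omega⟩
  have h := key n t (by omega) s
  rw [VarTraj, hn, h.1, h.2]
  ring
end

section
/- Define q̂_{π,t}(s,a) = q̃_{π,t}(s,a) + v_{π,t}(s)², where q̃ is the action-value of π for the reward r̃_{π,t}(s,a) = ν_{π,t}(s,a) + q_{π,t}(s,a)² − v_{π,t}(s)². Then q̂ satisfies the Bellman equation for the reward r̂_{π,t}(s,a) = 2r(s,a)q_{π,t}(s,a) − r(s,a)²; that is, q̂_{π,T−1}(s,a) = r̂_{π,T−1}(s,a) and for t ≤ T−2, q̂_{π,t}(s,a) = r̂_{π,t}(s,a) + ∑_{s',a'} p(s'|s,a)π_{t+1}(a'|s') q̂_{π,t+1}(s',a'). -/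
open Finset

/-- `q̂_{π,t} = q̃_{π,t} + v_{π,t}²` satisfies the Bellman equation for the
reward `r̂_{π,t}(s,a) = 2 r(s,a) q_{π,t}(s,a) − r(s,a)²`. -/
theorem qhat_bellman {S A : Type} [Fintype S] [Fintype A]
    (T : ℕ) (hT : 1 ≤ T) (p : S → A → S → ℝ) (r : S → A → ℝ) (π : ℕ → S → A → ℝ)
    (v : ℕ → S → ℝ) (q qt qhat : ℕ → S → A → ℝ)
    (hp0 : ∀ s a s', 0 ≤ p s a s') (hp1 : ∀ s a, ∑ s', p s a s' = 1)
    (hπ0 : ∀ t s a, 0 ≤ π t s a) (hπ1 : ∀ t s, ∑ a, π t s a = 1)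
    (hvT : ∀ s, v T s = 0)
    (hq : ∀ t, t < T → ∀ s a, q t s a = r s a + ∑ s', p s a s' * v (t+1) s')
    (hv : ∀ t, t < T → ∀ s, v t s = ∑ a, π t s a * q t s a)
    (hqtT : ∀ s a, qt (T - 1) s a
      = nuF p v (T - 1) s a + (q (T - 1) s a) ^ 2 - (v (T - 1) s) ^ 2)
    (hqt : ∀ t, t + 1 < T → ∀ s a, qt t s a
      = (nuF p v t s a + (q t s a) ^ 2 - (v t s) ^ 2)
        + ∑ s', ∑ a', p s a s' * π (t+1) s' a' * qt (t+1) s' a')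
    (hqhat : ∀ t s a, qhat t s a = qt t s a + (v t s) ^ 2) :
    (∀ s a, qhat (T - 1) s a = 2 * r s a * q (T - 1) s a - (r s a) ^ 2) ∧
    (∀ t, t + 1 < T → ∀ s a, qhat t s a
      = (2 * r s a * q t s a - (r s a) ^ 2)
        + ∑ s', ∑ a', p s a s' * π (t+1) s' a' * qhat (t+1) s' a') := by

  have hT1 : T - 1 + 1 = T := Nat.succ_pred_eq_of_pos hT
  constructor
  · intro s a
    have hlt : T - 1 < T := Nat.sub_lt hT one_pos
    have hE : ∑ s', p s a s' * v (T - 1 + 1) s' = 0 := by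
      rw [hT1]; simp [hvT]
    have hE2 : ∑ s', p s a s' * (v (T - 1 + 1) s')^2 = 0 := by
      rw [hT1]; simp [hvT]
    rw [hqhat, hqtT, nuF, hE, hE2, hq (T-1) hlt s a, hE]
    ring
  · intro t ht s a
    have htlt : t < T := lt_of_le_of_lt (Nat.le_succ t) ht
    have hq' := hq t htlt s a
    have key : ∑ s', ∑ a', p s a s' * π (t+1) s' a' * qhat (t+1) s' a'
        = (∑ s', ∑ a', p s a s' * π (t+1) s' a' * qt (t+1) s' a')
          + ∑ s', p s a s' * (v (t+1) s')^2 := by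
      rw [← Finset.sum_add_distrib]
      refine Finset.sum_congr rfl fun s' _ => ?_
      simp only [hqhat]
      have : ∀ a', p s a s' * π (t+1) s' a' * (qt (t+1) s' a' + (v (t+1) s')^2)
          = p s a s' * π (t+1) s' a' * qt (t+1) s' a'
            + p s a s' * (v (t+1) s')^2 * π (t+1) s' a' := fun a' => by ring
      simp_rw [this]
      rw [Finset.sum_add_distrib, ← Finset.mul_sum, hπ1, mul_one]
    rw [hqhat, hqt t ht s a, key, nuF, hq']
    ring
end
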